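/- Let H be a real Hilbert space, P ⊆ ℝⁿ open, f : P → H a C² map, and h₀ ∈ P a point at which the vectors ∂_{h_1} f(h₀), …, ∂_{h_n} f(h₀) are linearly independent. Then there exist ε > 0 and a convex open neighborhood U ⊆ P of h₀ such that for every u ∈ H with ‖u − f(h₀)‖ < ε, the function Φ_u : U → ℝ, Φ_u(h) = ½‖u − f(h)‖², is strictly convex on U; in particular Φ_u has at most one local minimum point in U. -/

import Mathlib

/-!
Along a segment `t ↦ x + t • v` in `U`, the second derivative of `Φ_u = ½‖u - f‖²` is
`⟪f h - u, D²f(h) v v⟫ + ‖Df(h) v‖²`. Linear independence of the partial derivatives bounds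
`Df(h₀)` below, `c‖v‖ ≤ ‖Df(h₀) v‖`; by continuity `Df(h)` stays bounded below by `c/2` and
`D²f(h)` stays bounded near `h₀`, so for `u` close to `f(h₀)` the first term is dominated by
the second and `Φ_u` is strictly convex on a small ball. Local minima of a convex function
on a convex set are global, and a strictly convex function has at most one global minimum.
-/

open Filter Topology
open scoped RealInnerProductSpace

theorem StrictConvexOn.eq_of_isLocalMinOn {E : Type*} [AddCommGroup E] [TopologicalSpace E]
    [Module ℝ E] [IsTopologicalAddGroup E] [ContinuousSMul ℝ E] {s : Set E} {φ : E → ℝ} {x y : E}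
    (hφ : StrictConvexOn ℝ s φ) (hx : x ∈ s) (hy : y ∈ s)
    (hφx : IsLocalMinOn φ s x) (hφy : IsLocalMinOn φ s y) : x = y :=
  hφ.eq_of_isMinOn (.of_isLocalMinOn_of_convexOn hx hφx hφ.convexOn)
    (.of_isLocalMinOn_of_convexOn hy hφy hφ.convexOn) hx hy

theorem strictConvexOn_of_forall_lineMap {𝕜 E β : Type*} [Field 𝕜] [LinearOrder 𝕜]
    [IsStrictOrderedRing 𝕜] [AddCommGroup E] [Module 𝕜 E] [AddCommGroup β] [PartialOrder β]
    [Module 𝕜 β] {U : Set E} {φ : E → β} (hU : Convex 𝕜 U)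
    (hφ : ∀ x ∈ U, ∀ y ∈ U, x ≠ y →
      StrictConvexOn 𝕜 (AffineMap.lineMap (k := 𝕜) x y ⁻¹' U) (φ ∘ AffineMap.lineMap x y)) :
    StrictConvexOn 𝕜 U φ := by
  refine ⟨hU, fun x hx y hy hxy a b ha hb hab => ?_⟩
  have h := (hφ x hx y hy hxy).2 (x := 0) (y := 1) (by simpa using hx) (by simpa using hy)
    zero_ne_one ha hb hab
  rw [eq_sub_of_add_eq hab] at h ⊢
  simpa [AffineMap.lineMap_apply_module] using h

theorem strictConvexOn_of_hasDerivAt2_pos {D : Set ℝ} (hD : Convex ℝ D) (hDo : IsOpen D)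
    {g g' g'' : ℝ → ℝ} (hg : ∀ t ∈ D, HasDerivAt g (g' t) t)
    (hg' : ∀ t ∈ D, HasDerivAt g' (g'' t) t) (hpos : ∀ t ∈ D, 0 < g'' t) :
    StrictConvexOn ℝ D g := by
  refine strictConvexOn_of_deriv2_pos hD (fun t ht => (hg t ht).continuousAt.continuousWithinAt)
    fun t ht => ?_
  rw [hDo.interior_eq] at ht
  have hderiv : deriv g =ᶠ[𝓝 t] g' :=
    eventually_of_mem (hDo.mem_nhds ht) fun s hs => (hg s hs).deriv
  simpa [hderiv.deriv_eq, (hg' t ht).deriv] using hpos t ht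

theorem mul_norm_le_norm_apply_of_norm_sub_le {𝕜 E F : Type*} [NontriviallyNormedField 𝕜]
    [SeminormedAddCommGroup E] [SeminormedAddCommGroup F] [NormedSpace 𝕜 E] [NormedSpace 𝕜 F]
    {S T : E →L[𝕜] F} {c d : ℝ} (hT : ∀ v, c * ‖v‖ ≤ ‖T v‖) (hST : ‖S - T‖ ≤ d) (v : E) :
    (c - d) * ‖v‖ ≤ ‖S v‖ := by
  have : ‖T v‖ - ‖S v‖ ≤ d * ‖v‖ := calc
    ‖T v‖ - ‖S v‖ ≤ ‖(S - T) v‖ := by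
      simpa [norm_sub_rev] using norm_sub_norm_le (T v) (S v)
    _ ≤ d * ‖v‖ := (S - T).le_of_opNorm_le hST v
  linarith [hT v]

theorem exists_pos_mul_norm_le_of_linearIndependent {ι E F : Type*} [NormedAddCommGroup E]
    [NormedSpace ℝ E] [FiniteDimensional ℝ E] [NormedAddCommGroup F] [NormedSpace ℝ F]
    (b : Module.Basis ι ℝ E) {T : E →L[ℝ] F} (hT : LinearIndependent ℝ (T ∘ b)) :
    ∃ c > 0, ∀ v, c * ‖v‖ ≤ ‖T v‖ :=
  antilipschitzWith_iff_exists_mul_le_norm.mp <|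
    let ⟨K, _, hK⟩ := (T : E →ₗ[ℝ] F).injective_iff_antilipschitz.mp
      (LinearMap.injective_of_linearIndependent b.span_eq hT)
    ⟨K, hK⟩

theorem hasDerivAt_half_norm_sq_sub {H : Type*} [NormedAddCommGroup H] [InnerProductSpace ℝ H]
    (u : H) {γ : ℝ → H} {γ' : H} {t : ℝ} (hγ : HasDerivAt γ γ' t) :
    HasDerivAt (fun s => 1 / 2 * ‖u - γ s‖ ^ 2) ⟪γ t - u, γ'⟫ t := by
  refine (((hasDerivAt_const t u).sub hγ).norm_sq.const_mul (1 / 2 : ℝ)).congr_deriv ?_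
  rw [Pi.sub_apply, zero_sub, ← inner_neg_neg, neg_sub, neg_neg]
  ring

theorem inner_apply_apply_add_sq_norm_pos {E H : Type*} [NormedAddCommGroup E] [NormedSpace ℝ E]
    [NormedAddCommGroup H] [InnerProductSpace ℝ H] {A : E →L[ℝ] H} {B : E →L[ℝ] E →L[ℝ] H}
    {w : H} {a : ℝ} (ha : 0 ≤ a) (hA : ∀ v, a * ‖v‖ ≤ ‖A v‖) (hB : ‖w‖ * ‖B‖ < a ^ 2) {v : E}
    (hv : v ≠ 0) : 0 < ⟪w, B v v⟫ + ‖A v‖ ^ 2 := by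
  have hinner : -(‖w‖ * (‖B‖ * ‖v‖ * ‖v‖)) ≤ ⟪w, B v v⟫ := calc
    -(‖w‖ * (‖B‖ * ‖v‖ * ‖v‖)) ≤ -(‖w‖ * ‖B v v‖) :=
      neg_le_neg (mul_le_mul_of_nonneg_left (B.le_opNorm₂ v v) (norm_nonneg w))
    _ ≤ ⟪w, B v v⟫ := neg_le_of_abs_le (abs_real_inner_le_norm w (B v v))
  have hAv : (a * ‖v‖) ^ 2 ≤ ‖A v‖ ^ 2 := pow_le_pow_left₀ (by positivity) (hA v) 2
  have hgap : 0 < (a ^ 2 - ‖w‖ * ‖B‖) * ‖v‖ ^ 2 :=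
    mul_pos (sub_pos.2 hB) (pow_pos (norm_pos_iff.2 hv) 2)
  linarith

theorem strictConvexOn_half_norm_sq_sub {E H : Type*} [NormedAddCommGroup E] [NormedSpace ℝ E]
    [NormedAddCommGroup H] [InnerProductSpace ℝ H] {U : Set E} (hUo : IsOpen U)
    (hUc : Convex ℝ U) {f : E → H} (hf : ContDiffOn ℝ 2 f U) (u : H) {a : ℝ} (ha : 0 ≤ a)
    (hlow : ∀ h ∈ U, ∀ v, a * ‖v‖ ≤ ‖fderiv ℝ f h v‖)
    (hcurv : ∀ h ∈ U, ‖f h - u‖ * ‖fderiv ℝ (fderiv ℝ f) h‖ < a ^ 2) :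
    StrictConvexOn ℝ U (fun h => 1 / 2 * ‖u - f h‖ ^ 2) := by
  have hf₁ : ∀ h ∈ U, HasFDerivAt f (fderiv ℝ f h) h := fun h hh =>
    ((hf.differentiableOn (by norm_num)).differentiableAt (hUo.mem_nhds hh)).hasFDerivAt
  have hf₂ : ∀ h ∈ U, HasFDerivAt (fderiv ℝ f) (fderiv ℝ (fderiv ℝ f) h) h := fun h hh =>
    (((hf.fderiv_of_isOpen hUo (by norm_num : (1 : WithTop ℕ∞) + 1 ≤ 2)).differentiableOn
      one_ne_zero).differentiableAt (hUo.mem_nhds hh)).hasFDerivAt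
  refine strictConvexOn_of_forall_lineMap hUc fun x _ y _ hxy => ?_
  set ℓ := AffineMap.lineMap (k := ℝ) x y
  have hℓ : ∀ t, HasDerivAt ℓ (y - x) t := fun t => AffineMap.hasDerivAt_lineMap
  refine strictConvexOn_of_hasDerivAt2_pos (hUc.affine_preimage ℓ)
    (hUo.preimage AffineMap.lineMap_continuous)
    (g' := fun t => ⟪f (ℓ t) - u, fderiv ℝ f (ℓ t) (y - x)⟫)
    (g'' := fun t => ⟪f (ℓ t) - u, fderiv ℝ (fderiv ℝ f) (ℓ t) (y - x) (y - x)⟫ +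
      ‖fderiv ℝ f (ℓ t) (y - x)‖ ^ 2) (fun t ht => ?_) (fun t ht => ?_) (fun t ht => ?_)
  · exact hasDerivAt_half_norm_sq_sub u ((hf₁ _ ht).comp_hasDerivAt t (hℓ t))
  · have hdf := (ContinuousLinearMap.apply ℝ H (y - x)).hasFDerivAt.comp_hasDerivAt t
      ((hf₂ _ ht).comp_hasDerivAt t (hℓ t))
    refine ((((hf₁ _ ht).comp_hasDerivAt t (hℓ t)).sub_const u).inner ℝ hdf).congr_deriv ?_
    simp only [Function.comp_apply, ContinuousLinearMap.apply_apply, real_inner_self_eq_norm_sq]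
  · exact inner_apply_apply_add_sq_norm_pos ha (hlow _ ht) (hcurv _ ht) (sub_ne_zero.2 hxy.symm)

theorem exists_pos_eventually_norm_mul_norm_fderiv_fderiv_lt {E H : Type*}
    [NormedAddCommGroup E] [NormedSpace ℝ E] [NormedAddCommGroup H] [InnerProductSpace ℝ H]
    {P : Set E} (hP : IsOpen P) {f : E → H} (hf : ContDiffOn ℝ 2 f P) {h₀ : E} (hh₀ : h₀ ∈ P)
    {c : ℝ} (hc : 0 < c) (hT : ∀ v, c * ‖v‖ ≤ ‖fderiv ℝ f h₀ v‖) :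
    ∃ ε > 0, ∀ᶠ h in 𝓝 h₀, h ∈ P ∧ (∀ v, c / 2 * ‖v‖ ≤ ‖fderiv ℝ f h v‖) ∧
      ∀ u, ‖u - f h₀‖ < ε → ‖f h - u‖ * ‖fderiv ℝ (fderiv ℝ f) h‖ < (c / 2) ^ 2 := by
  set M := ‖fderiv ℝ (fderiv ℝ f) h₀‖ + 1
  have hM : 0 < M := by positivity
  set ε := c ^ 2 / (16 * M)
  have hε : 0 < ε := by positivity
  have hPn := hP.mem_nhds hh₀
  have hf₀ : ContinuousAt f h₀ := hf.continuousOn.continuousAt hPn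
  have hf₁ : ContinuousAt (fderiv ℝ f) h₀ :=
    (hf.continuousOn_fderiv_of_isOpen hP (by norm_num)).continuousAt hPn
  have hf₂ : ContinuousAt (fun h => ‖fderiv ℝ (fderiv ℝ f) h‖) h₀ :=
    ContinuousAt.norm (E := E →L[ℝ] E →L[ℝ] H) <|
      ((hf.fderiv_of_isOpen hP (by norm_num : (1 : WithTop ℕ∞) + 1 ≤ 2)).continuousOn_fderiv_of_isOpen
        hP le_rfl).continuousAt hPn
  refine ⟨ε, hε, ?_⟩
  filter_upwards [hPn, Metric.tendsto_nhds.mp hf₀ ε hε, Metric.tendsto_nhds.mp hf₁ (c / 2)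
    (by positivity), hf₂.eventually_lt continuousAt_const (lt_add_one _)]
    with h hhP hfh hf₁h hf₂h
  refine ⟨hhP, fun v => ?_, fun u hu => ?_⟩
  · rw [dist_eq_norm] at hf₁h
    convert mul_norm_le_norm_apply_of_norm_sub_le hT hf₁h.le v using 2
    ring
  · have hfu : ‖f h - u‖ < 2 * ε := calc
      ‖f h - u‖ ≤ dist (f h) (f h₀) + ‖u - f h₀‖ := by
        rw [dist_eq_norm, norm_sub_rev u]; exact norm_sub_le_norm_sub_add_norm_sub _ _ _
      _ < 2 * ε := by linarith
    calc ‖f h - u‖ * ‖fderiv ℝ (fderiv ℝ f) h‖ ≤ 2 * ε * M :=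
          mul_le_mul hfu.le hf₂h.le (by positivity) (by positivity)
      _ = c ^ 2 / 8 := by simp only [ε]; field_simp; ring
      _ < (c / 2) ^ 2 := by nlinarith

/-- If `f : P → H` is `C²` and the first partial derivatives
of `f` at `h₀ ∈ P` are linearly independent, then there are `ε > 0` and a
convex open neighborhood `U ⊆ P` of `h₀` such that for every `u` with
`‖u − f(h₀)‖ < ε` the squared-distance functional `Φ_u(h) = ½‖u − f(h)‖²` is
strictly convex on `U`; in particular it has at most one local minimum point
in `U`. -/
theorem stmt13
    {H : Type*} [NormedAddCommGroup H] [InnerProductSpace ℝ H]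
    {n : ℕ} (P : Set (EuclideanSpace ℝ (Fin n))) (hP : IsOpen P)
    (f : EuclideanSpace ℝ (Fin n) → H) (hf : ContDiffOn ℝ 2 f P)
    (h₀ : EuclideanSpace ℝ (Fin n)) (hh₀ : h₀ ∈ P)
    (hind : LinearIndependent ℝ
      (fun j : Fin n => fderiv ℝ f h₀ (EuclideanSpace.single j 1))) :
    ∃ ε > 0, ∃ U : Set (EuclideanSpace ℝ (Fin n)),
      IsOpen U ∧ Convex ℝ U ∧ U ⊆ P ∧ h₀ ∈ U ∧
      ∀ u : H, ‖u - f h₀‖ < ε →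
        StrictConvexOn ℝ U (fun h => (1 / 2 : ℝ) * ‖u - f h‖ ^ 2) ∧
        ∀ h₁ ∈ U, ∀ h₂ ∈ U,
          IsLocalMinOn (fun h => (1 / 2 : ℝ) * ‖u - f h‖ ^ 2) U h₁ →
          IsLocalMinOn (fun h => (1 / 2 : ℝ) * ‖u - f h‖ ^ 2) U h₂ →
          h₁ = h₂ := by
  obtain ⟨c, hc, hT⟩ := exists_pos_mul_norm_le_of_linearIndependent
    (EuclideanSpace.basisFun (Fin n) ℝ).toBasis (T := fderiv ℝ f h₀) (by convert hind; simp)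
  obtain ⟨ε, hε, hev⟩ := exists_pos_eventually_norm_mul_norm_fderiv_fderiv_lt hP hf hh₀ hc hT
  obtain ⟨δ, hδ, hball⟩ := Metric.eventually_nhds_iff_ball.mp hev
  refine ⟨ε, hε, Metric.ball h₀ δ, Metric.isOpen_ball, convex_ball h₀ δ,
    fun h hh => (hball h hh).1, Metric.mem_ball_self hδ, fun u hu => ?_⟩
  have hconv := strictConvexOn_half_norm_sq_sub Metric.isOpen_ball (convex_ball h₀ δ)
    (hf.mono fun h hh => (hball h hh).1) u (by positivity : 0 ≤ c / 2)
    (fun h hh => (hball h hh).2.1) (fun h hh => (hball h hh).2.2 u hu)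
  exact ⟨hconv, fun h₁ h₁U h₂ h₂U => hconv.eq_of_isLocalMinOn h₁U h₂U⟩
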